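/- The dual graph of the Farey graph is connected: any two triangles of F can be joined by a finite sequence of triangles in which consecutive triangles share a common edge. -/

import Mathlib

/-- Adjacency in the Farey graph on `ℚ ∪ {∞}`, where `∞` (the vertex `none`) is
regarded as `1/0`: two reduced fractions `p/q` and `r/s` are adjacent iff `|ps - rq| = 1`. -/
def fareyAdj : Option ℚ → Option ℚ → Prop
  | some p, some q => |p.num * (q.den : ℤ) - q.num * (p.den : ℤ)| = 1
  | some p, none => p.den = 1
  | none, some q => q.den = 1
  | none, none => False

/-- The Farey graph: vertices are `ℚ ∪ {∞}` (modelled as `Option ℚ`, with `none = ∞ = 1/0`),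
and `p/q`, `r/s` (in lowest terms) are adjacent iff `|ps - rq| = 1`. -/
def fareyGraph : SimpleGraph (Option ℚ) where
  Adj x y := fareyAdj x y
  symm := ⟨by
    rintro (_ | p) (_ | q) h <;> simp_all [fareyAdj, abs_sub_comm]⟩
  loopless := ⟨by
    rintro (_ | p) h
    · exact h
    · simp [fareyAdj] at h⟩

/-- A triangle of the Farey graph: a set of three pairwise adjacent vertices. -/
def IsFareyTriangle (t : Finset (Option ℚ)) : Prop :=
  t.card = 3 ∧ ∀ x ∈ t, ∀ y ∈ t, x ≠ y → fareyGraph.Adj x y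

/-- The dual graph of the Farey graph: vertices are the triangles of the Farey graph,
two triangles being adjacent iff they share exactly two vertices (a common edge). -/
def fareyDual : SimpleGraph {t : Finset (Option ℚ) // IsFareyTriangle t} where
  Adj s t := s ≠ t ∧ (s.1 ∩ t.1).card = 2
  symm := ⟨by
    rintro s t ⟨h1, h2⟩
    exact ⟨h1.symm, by rwa [Finset.inter_comm]⟩⟩
  loopless := ⟨fun s h => h.1 rfl⟩

/-!
Read a vertex as the primitive vector `(num, den)` of `ℤ²`, so that Farey adjacency is
`|det| = 1`. In a triangle with finite vertices the vertex of largest denominator is the sum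
(mediant) of the other two; flipping across the opposite edge replaces it by their difference and
lowers the sum of the denominators. This descent ends at a triangle through `∞`, that is, at one
of the triangles `{∞, k, k + 1}`, and these form a path in the dual graph.
-/

namespace Farey

def num : Option ℚ → ℤ
  | none => 1
  | some q => q.num

def den : Option ℚ → ℕ
  | none => 0
  | some q => q.den

def det (x y : Option ℚ) : ℤ := num x * den y - num y * den x

theorem adj_iff_abs_det {x y : Option ℚ} : fareyGraph.Adj x y ↔ |det x y| = 1 := by
  rcases x with _ | p <;> rcases y with _ | q <;>
    simp [fareyGraph, fareyAdj, det, num, den]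

theorem den_pos {x : Option ℚ} (hx : x ≠ none) : 0 < den x := by
  obtain ⟨q, rfl⟩ := Option.ne_none_iff_exists'.mp hx
  exact q.den_pos

theorem exists_num_den_eq_sign_mul {a b : ℤ} (h : IsCoprime a b) :
    ∃ x ε, |ε| = 1 ∧ num x = ε * a ∧ (den x : ℤ) = ε * b := by
  -- the sign is forced for `b < 0`, and for `(a, b) = (-1, 0)`, which is `∞` as well
  have of_pos {a b : ℤ} (hb : 0 < b) (h : IsCoprime a b) : ∃ x, num x = a ∧ (den x : ℤ) = b :=
    have hab : a.natAbs.Coprime b.natAbs := Int.isCoprime_iff_gcd_eq_one.mp h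
    ⟨some (a / b), Rat.num_div_eq_of_coprime hb hab, Rat.den_div_eq_of_coprime hb hab⟩
  rcases lt_trichotomy b 0 with hb | rfl | hb
  · obtain ⟨x, hnum, hden⟩ := of_pos (neg_pos.mpr hb) h.neg_neg
    exact ⟨x, -1, by simp, by simp [hnum], by simp [hden]⟩
  · obtain ha | ha := Int.isUnit_iff.mp (isCoprime_zero_right.mp h) <;>
      exact ⟨none, a, by simp [ha], by simp [num, ha], by simp [den]⟩
  · obtain ⟨x, hnum, hden⟩ := of_pos hb h
    exact ⟨x, 1, by simp, by simp [hnum], by simp [hden]⟩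

theorem num_den_eq_add_of_den_le {x y z : Option ℚ} (hxy : fareyGraph.Adj x y)
    (hxz : fareyGraph.Adj x z) (hyz : fareyGraph.Adj y z) (hy : 0 < den y) (hz : 0 < den z)
    (hyx : den y ≤ den x) (hzx : den z ≤ den x) :
    num x = num y + num z ∧ den x = den y + den z := by
  rw [adj_iff_abs_det] at hxy hxz hyz
  have hnum : det y z * num x + det z x * num y + det x y * num z = 0 := by
    simp only [det]; ring
  have hden : det y z * den x + det z x * den y + det x y * den z = 0 := by
    simp only [det]; ring
  have hzx' : |det z x| = 1 := by rw [← abs_neg]; convert hxz using 2; simp only [det]; ring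
  -- all three determinants are `±1`, so `x = ±y ± z`, and maximality of `den x` fixes both signs
  rcases (abs_eq zero_le_one).mp hyz with h1 | h1 <;>
  rcases (abs_eq zero_le_one).mp hzx' with h2 | h2 <;>
  rcases (abs_eq zero_le_one).mp hxy with h3 | h3 <;>
  · simp only [h1, h2, h3] at hnum hden
    omega

theorem exists_adj_adj_den_eq {y z : Option ℚ} (hyz : fareyGraph.Adj y z) :
    ∃ w, fareyGraph.Adj w y ∧ fareyGraph.Adj w z ∧ (den w : ℤ) = |(den y : ℤ) - den z| := by
  rw [adj_iff_abs_det] at hyz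
  have hcop : IsCoprime (num y - num z) ((den y : ℤ) - den z) := by
    rcases (abs_eq zero_le_one).mp hyz with h | h
    · exact ⟨den y, -num y, by rw [← h, det]; ring⟩
    · exact ⟨-den y, num y, by rw [← neg_eq_iff_eq_neg.mpr h, det]; ring⟩
  obtain ⟨w, ε, hε, hnum, hden⟩ := exists_num_den_eq_sign_mul hcop
  have hwy : det w y = ε * det y z := by simp only [det, hnum, hden]; ring
  have hwz : det w z = ε * det y z := by simp only [det, hnum, hden]; ring
  refine ⟨w, ?_, ?_, ?_⟩
  · rw [adj_iff_abs_det, hwy, abs_mul, hε, hyz, one_mul]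
  · rw [adj_iff_abs_det, hwz, abs_mul, hε, hyz, one_mul]
  · rw [← abs_of_nonneg (Int.natCast_nonneg (den w)), hden, abs_mul, hε, one_mul]

abbrev Triangle := {t : Finset (Option ℚ) // IsFareyTriangle t}

theorem isFareyTriangle_iff_isNClique {t : Finset (Option ℚ)} :
    IsFareyTriangle t ↔ fareyGraph.IsNClique 3 t :=
  ⟨fun h => ⟨h.2, h.1⟩, fun h => ⟨h.card_eq, h.isClique⟩⟩

theorem isFareyTriangle_triple_iff {x y z : Option ℚ} :
    IsFareyTriangle {x, y, z} ↔
      fareyGraph.Adj x y ∧ fareyGraph.Adj x z ∧ fareyGraph.Adj y z := by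
  rw [isFareyTriangle_iff_isNClique, SimpleGraph.is3Clique_triple_iff]

theorem fareyDual_adj_of_eq_triple {s t : Triangle} {w x y z : Option ℚ}
    (hs : s.1 = {x, y, z}) (ht : t.1 = {w, y, z}) (hxw : x ≠ w) : fareyDual.Adj s t := by
  have hxyz := s.2
  rw [hs, isFareyTriangle_triple_iff] at hxyz
  obtain ⟨hxy, hxz, hyz⟩ := hxyz
  refine ⟨fun hst => ?_, ?_⟩
  · have hx : x ∈ t.1 := by rw [← hst, hs]; simp
    simp only [ht, Finset.mem_insert, Finset.mem_singleton] at hx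
    exact hx.elim hxw (fun h => h.elim hxy.ne hxz.ne)
  · have : s.1 ∩ t.1 = {y, z} := by
      ext v
      simp only [hs, ht, Finset.mem_inter, Finset.mem_insert, Finset.mem_singleton]
      grind
    rw [this, Finset.card_pair hyz.ne]

def weight (t : Finset (Option ℚ)) : ℕ := ∑ v ∈ t, den v

theorem weight_triple {x y z : Option ℚ} (hxy : x ≠ y) (hxz : x ≠ z) (hyz : y ≠ z) :
    weight {x, y, z} = den x + den y + den z := by
  rw [weight, Finset.sum_insert (by simp [hxy, hxz]), Finset.sum_pair hyz, add_assoc]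

theorem exists_fareyDual_adj_weight_lt (s : Triangle) (hs : none ∉ s.1) :
    ∃ t, fareyDual.Adj s t ∧ weight t.1 < weight s.1 := by
  have hne : s.1.Nonempty := Finset.card_pos.mp (by rw [s.2.1]; norm_num)
  obtain ⟨x, hx, hmax⟩ := Finset.exists_max_image s.1 den hne
  obtain ⟨y, z, -, herase⟩ := Finset.card_eq_two.mp (by rw [Finset.card_erase_of_mem hx, s.2.1])
  have hsxyz : s.1 = {x, y, z} := by rw [← herase, Finset.insert_erase hx]
  have hmem : y ∈ s.1 ∧ z ∈ s.1 := by simp [hsxyz]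
  have hxyz := s.2
  rw [hsxyz, isFareyTriangle_triple_iff] at hxyz
  obtain ⟨hxy, hxz, hyz⟩ := hxyz
  have hy := den_pos (ne_of_mem_of_not_mem hmem.1 hs)
  have hz := den_pos (ne_of_mem_of_not_mem hmem.2 hs)
  have hmediant := num_den_eq_add_of_den_le hxy hxz hyz hy hz (hmax y hmem.1) (hmax z hmem.2)
  obtain ⟨w, hwy, hwz, hw⟩ := exists_adj_adj_den_eq hyz
  have hlt : den w < den x := by
    have : |(den y : ℤ) - den z| < den y + den z := abs_sub_lt_iff.mpr ⟨by omega, by omega⟩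
    omega
  have ht : IsFareyTriangle {w, y, z} := isFareyTriangle_triple_iff.mpr ⟨hwy, hwz, hyz⟩
  refine ⟨⟨_, ht⟩, fareyDual_adj_of_eq_triple hsxyz rfl (by rintro rfl; omega), ?_⟩
  rw [hsxyz, weight_triple hwy.ne hwz.ne hyz.ne, weight_triple hxy.ne hxz.ne hyz.ne]
  omega

theorem adj_none_iff {x : Option ℚ} : fareyGraph.Adj none x ↔ ∃ k : ℤ, x = some (k : ℚ) := by
  rcases x with _ | q
  · simp [fareyGraph, fareyAdj]
  · simp only [fareyGraph, fareyAdj, Option.some.injEq, Rat.den_eq_one_iff]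
    exact ⟨fun h => ⟨q.num, h.symm⟩, by rintro ⟨k, rfl⟩; simp⟩

theorem adj_intCast_iff {k l : ℤ} :
    fareyGraph.Adj (some (k : ℚ)) (some (l : ℚ)) ↔ |k - l| = 1 := by
  simp [fareyGraph, fareyAdj]

def fan (k : ℤ) : Finset (Option ℚ) := {none, some (k : ℚ), some ((k + 1 : ℤ) : ℚ)}

theorem isFareyTriangle_fan (k : ℤ) : IsFareyTriangle (fan k) :=
  isFareyTriangle_triple_iff.mpr
    ⟨adj_none_iff.mpr ⟨k, rfl⟩, adj_none_iff.mpr ⟨k + 1, rfl⟩, adj_intCast_iff.mpr (by simp)⟩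

theorem eq_fan_of_none_mem {t : Finset (Option ℚ)} (ht : IsFareyTriangle t) (h : none ∈ t) :
    ∃ k : ℤ, t = fan k := by
  obtain ⟨a, b, -, herase⟩ := Finset.card_eq_two.mp (by rw [Finset.card_erase_of_mem h, ht.1])
  have htab : t = {none, a, b} := by rw [← herase, Finset.insert_erase h]
  rw [htab, isFareyTriangle_triple_iff] at ht
  obtain ⟨⟨k, rfl⟩, ⟨l, rfl⟩, hkl⟩ := And.imp adj_none_iff.mp (And.imp_left adj_none_iff.mp) ht
  rcases (abs_eq zero_le_one).mp (adj_intCast_iff.mp hkl) with h | h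
  · obtain rfl : k = l + 1 := by omega
    exact ⟨l, by rw [htab, fan, Finset.pair_comm]⟩
  · obtain rfl : l = k + 1 := by omega
    exact ⟨k, htab⟩

theorem fareyDual_adj_fan_succ (k : ℤ) :
    fareyDual.Adj ⟨fan (k + 1), isFareyTriangle_fan _⟩ ⟨fan k, isFareyTriangle_fan k⟩ :=
  fareyDual_adj_of_eq_triple (x := some ((k + 1 + 1 : ℤ) : ℚ)) (y := none)
    (z := some ((k + 1 : ℤ) : ℚ)) (w := some (k : ℚ))
    (by simp only [fan]; grind) (by simp only [fan]; grind)
    (by simp only [ne_eq, Option.some.injEq, Int.cast_inj]; omega)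

theorem fan_reachable_fan_zero (k : ℤ) :
    fareyDual.Reachable ⟨fan k, isFareyTriangle_fan k⟩ ⟨fan 0, isFareyTriangle_fan 0⟩ := by
  induction k using Int.induction_on with
  | zero => rfl
  | succ k ih => exact (fareyDual_adj_fan_succ k).reachable.trans ih
  | pred k ih =>
    exact ((sub_add_cancel (-(k : ℤ)) 1 ▸ fareyDual_adj_fan_succ (-k - 1)).symm.reachable).trans ih

theorem reachable_fan_zero (t : Triangle) :
    fareyDual.Reachable t ⟨fan 0, isFareyTriangle_fan 0⟩ := by
  by_cases h : none ∈ t.1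
  · obtain ⟨k, hk⟩ := eq_fan_of_none_mem t.2 h
    have : t = ⟨fan k, isFareyTriangle_fan k⟩ := Subtype.ext hk
    exact this ▸ fan_reachable_fan_zero k
  · obtain ⟨t', hadj, hlt⟩ := exists_fareyDual_adj_weight_lt t h
    exact hadj.reachable.trans (reachable_fan_zero t')
termination_by weight t.1

end Farey

/-- **The dual graph of the Farey graph is connected:** any two triangles of the Farey
graph are joined by a finite sequence of triangles in which consecutive triangles
share a common edge. -/
theorem fareyDual_connected : fareyDual.Connected :=
  have : Nonempty Farey.Triangle := ⟨⟨_, Farey.isFareyTriangle_fan 0⟩⟩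
  ⟨fun s t => (Farey.reachable_fan_zero s).trans (Farey.reachable_fan_zero t).symm⟩
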